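/- Fix 0 < γ < 0.5 and consider the nonlinear Markov chain on E = {1,2,3,4} whose transition matrix given the current distribution μ = (μ₁,μ₂,μ₃,μ₄) is P_μ with rows: row 1 = (0, γμ₁, 0.5 − γμ₁, 0.5); row 2 = (0.5, 0.5, 0, 0); row 3 = (0.5, 0, 0.5, 0); row 4 = (0, 0.5, 0, 0.5). Then this chain has a unique invariant distribution π (satisfying π P_π = π), and for every initial probability vector μ₀ the marginals μ_{n+1} = μ_n P_{μ_n} converge to π exponentially fast: ‖μ_n − π‖_TV ≤ ‖μ₀ − π‖_TV · ((1+γ)/2)^{⌊n/2⌋} · c_n, where c_n = 1 + γ if n is odd and c_n = 1 if n is even. In particular, the one-step conditions of Butkovsky fail for this chain (the one-step Dobrushin-type constant is α = 0 while the one-step Lipschitz constant is λ = γ > α), yet exponential convergence holds. -/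

import Mathlib

open Finset

/-- A probability vector on the four-point state space `{1,2,3,4}`. -/
def IsProbVec (μ : Fin 4 → ℝ) : Prop := (∀ i, 0 ≤ μ i) ∧ ∑ i, μ i = 1

/-- Total variation distance between two (row) vectors: `‖μ − ν‖_TV = Σᵢ |μᵢ − νᵢ|`. -/
def tvVec (μ ν : Fin 4 → ℝ) : ℝ := ∑ i, |μ i - ν i|

/-- Transition matrix of the second example chain, depending on the current law `μ`. -/
noncomputable def Pmat (γ : ℝ) (μ : Fin 4 → ℝ) : Fin 4 → Fin 4 → ℝ :=
  ![![0, γ * μ 0, 0.5 - γ * μ 0, 0.5],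
    ![0.5, 0.5, 0, 0],
    ![0.5, 0, 0.5, 0],
    ![0, 0.5, 0, 0.5]]

/-- One step of the marginal law: `(μP_μ)_j = Σᵢ μᵢ P_μ(i,j)`. -/
noncomputable def stepVec (γ : ℝ) (μ : Fin 4 → ℝ) : Fin 4 → ℝ :=
  fun j => ∑ i, μ i * Pmat γ μ i j

/-- Marginals of the chain: `μ_{n+1} = μ_n P_{μ_n}`. -/
noncomputable def margVec (γ : ℝ) (μ0 : Fin 4 → ℝ) : ℕ → (Fin 4 → ℝ)
  | 0 => μ0
  | n + 1 => stepVec γ (margVec γ μ0 n)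

/-!
The only nonlinearity of the chain is the term `γ μ₁²` (indices as in the paper), and
`μ₁² − ν₁² = (μ₁ − ν₁)(μ₁ + ν₁)` turns the difference of one-step images into a linear image:
`μP_μ − νP_ν = (μ − ν) P_{μ+ν}`. With `ν = π`, the deviation `μ − π` is thus carried by
`P_{μ+π}`, whose rows have `ℓ¹`-norm at most `1 + γ`. Over two steps it is carried by a product
of two such matrices; its first and last columns are constant `1/4`, and since `μ − π` has total
mass `0` these constants may be subtracted, after which every row has `ℓ¹`-norm at most
`(1 + γ)/2`. Alternating the two bounds gives the rate. Rows 3 and 4 of `P_μ` have disjoint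
supports, and only row 1 depends on `μ`, through `γ μ₁`, with `2 |μ₁ − ν₁| ≤ ‖μ − ν‖_TV`.
-/

open Matrix

section LOneBounds

variable {m n : Type*} [Fintype m]

theorem sum_abs_vecMul_le [Fintype n] (v : m → ℝ) (M : Matrix m n ℝ) {K : ℝ}
    (hM : ∀ i, ∑ j, |M i j| ≤ K) : ∑ j, |(v ᵥ* M) j| ≤ K * ∑ i, |v i| :=
  calc ∑ j, |(v ᵥ* M) j| ≤ ∑ j, ∑ i, |v i| * |M i j| := by
        gcongr with j
        simpa only [vecMul, dotProduct, abs_mul] using abs_sum_le_sum_abs (fun i => v i * M i j) univ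
    _ = ∑ i, |v i| * ∑ j, |M i j| := by rw [sum_comm]; simp only [mul_sum]
    _ ≤ ∑ i, |v i| * K := by gcongr with i; exact hM i
    _ = K * ∑ i, |v i| := by rw [← sum_mul, mul_comm]

theorem vecMul_sub_replicateRow_of_sum_eq_zero {v : m → ℝ} (hv : ∑ i, v i = 0)
    (M : Matrix m n ℝ) (c : n → ℝ) : v ᵥ* (M - replicateRow m c) = v ᵥ* M := by
  rw [vecMul_sub, sub_eq_self]
  ext j
  simp [vecMul, dotProduct, replicateRow_apply, ← sum_mul, hv]

theorem two_mul_abs_le_sum_abs_of_sum_eq_zero {v : m → ℝ} (hv : ∑ i, v i = 0) (i : m) :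
    2 * |v i| ≤ ∑ j, |v j| := by
  classical
  rw [← add_sum_erase _ _ (mem_univ i)] at hv ⊢
  have hvi : v i = -∑ j ∈ univ.erase i, v j := by linarith
  calc 2 * |v i| = |v i| + |∑ j ∈ univ.erase i, v j| := by rw [two_mul, hvi, abs_neg]
    _ ≤ |v i| + ∑ j ∈ univ.erase i, |v j| := by gcongr; exact abs_sum_le_sum_abs _ _

end LOneBounds

theorem le_mul_pow_div_two_mul_of_two_step {x : ℕ → ℝ} {A r : ℝ} (hA : 0 ≤ A) (hr : 0 ≤ r)
    (h1 : ∀ n, x (n + 1) ≤ A * x n) (h2 : ∀ n, x (n + 2) ≤ r * x n) (n : ℕ) :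
    x n ≤ x 0 * r ^ (n / 2) * (if Odd n then A else 1) := by
  have heven : ∀ k, x (2 * k) ≤ x 0 * r ^ k := by
    intro k
    induction k with
    | zero => simp
    | succ k ih =>
      calc x (2 * (k + 1)) ≤ r * x (2 * k) := h2 (2 * k)
        _ ≤ r * (x 0 * r ^ k) := by gcongr
        _ = x 0 * r ^ (k + 1) := by ring
  obtain ⟨k, rfl | rfl⟩ := Nat.even_or_odd' n
  · rw [Nat.mul_div_cancel_left k two_pos, if_neg (Nat.not_odd_iff_even.2 (even_two_mul k)),
      mul_one]
    exact heven k
  · rw [show (2 * k + 1) / 2 = k by omega, if_pos (odd_two_mul_add_one k)]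
    calc x (2 * k + 1) ≤ A * x (2 * k) := h1 (2 * k)
      _ ≤ A * (x 0 * r ^ k) := by gcongr; exact heven k
      _ = x 0 * r ^ k * A := by ring

noncomputable def piVec (γ : ℝ) : Fin 4 → ℝ := ![1 / 4, 1 / 4 + γ / 8, 1 / 4 - γ / 8, 1 / 4]

section ExampleChain

variable {γ : ℝ}

theorem tvVec_eq_sum_abs_sub (μ ν : Fin 4 → ℝ) : tvVec μ ν = ∑ i, |(μ - ν) i| := rfl

theorem isProbVec_iff {μ : Fin 4 → ℝ} :
    IsProbVec μ ↔ (0 ≤ μ 0 ∧ 0 ≤ μ 1 ∧ 0 ≤ μ 2 ∧ 0 ≤ μ 3) ∧ μ 0 + μ 1 + μ 2 + μ 3 = 1 := by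
  simp [IsProbVec, Fin.forall_fin_succ, Fin.sum_univ_four, and_assoc]

theorem sum_sub_eq_zero_of_isProbVec {μ ν : Fin 4 → ℝ} (hμ : IsProbVec μ) (hν : IsProbVec ν) :
    ∑ i, (μ - ν) i = 0 := by
  simp [sum_sub_distrib, hμ.2, hν.2]

@[simp] theorem stepVec_apply_zero (μ : Fin 4 → ℝ) : stepVec γ μ 0 = μ 1 / 2 + μ 2 / 2 := by
  simp [stepVec, Pmat, Fin.sum_univ_four]; ring

@[simp] theorem stepVec_apply_one (μ : Fin 4 → ℝ) :
    stepVec γ μ 1 = γ * μ 0 ^ 2 + μ 1 / 2 + μ 3 / 2 := by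
  simp [stepVec, Pmat, Fin.sum_univ_four]; ring

@[simp] theorem stepVec_apply_two (μ : Fin 4 → ℝ) :
    stepVec γ μ 2 = μ 0 / 2 - γ * μ 0 ^ 2 + μ 2 / 2 := by
  simp [stepVec, Pmat, Fin.sum_univ_four]; ring

@[simp] theorem stepVec_apply_three (μ : Fin 4 → ℝ) : stepVec γ μ 3 = μ 0 / 2 + μ 3 / 2 := by
  simp [stepVec, Pmat, Fin.sum_univ_four]; ring

theorem isProbVec_stepVec (hγ0 : 0 ≤ γ) (hγ : γ ≤ 1 / 2) {μ : Fin 4 → ℝ} (hμ : IsProbVec μ) :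
    IsProbVec (stepVec γ μ) := by
  obtain ⟨⟨h0, h1, h2, h3⟩, hs⟩ := isProbVec_iff.1 hμ
  have hμ0 : γ * μ 0 ≤ 1 / 2 := by nlinarith
  refine isProbVec_iff.2 ⟨⟨?_, ?_, ?_, ?_⟩, ?_⟩ <;>
    simp only [stepVec_apply_zero, stepVec_apply_one, stepVec_apply_two, stepVec_apply_three] <;>
    nlinarith

theorem isProbVec_piVec (hγ0 : 0 ≤ γ) (hγ : γ ≤ 2) : IsProbVec (piVec γ) := by
  refine ⟨fun i => ?_, ?_⟩
  · fin_cases i <;> simp [piVec] <;> linarith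
  · simp [piVec, Fin.sum_univ_four]; ring

theorem stepVec_piVec : stepVec γ (piVec γ) = piVec γ := by
  ext j; fin_cases j <;> simp [piVec] <;> ring

theorem eq_piVec_of_stepVec_eq {μ : Fin 4 → ℝ} (hμ : ∑ i, μ i = 1) (h : stepVec γ μ = μ) :
    μ = piVec γ := by
  rw [Fin.sum_univ_four] at hμ
  have h0 := congrFun h 0
  have h1 := congrFun h 1
  have h3 := congrFun h 3
  simp only [stepVec_apply_zero, stepVec_apply_one, stepVec_apply_three] at h0 h1 h3
  have hμ0 : μ 0 = 1 / 4 := by linarith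
  rw [hμ0] at h1
  ext j; fin_cases j <;> simp [piVec] <;> linarith

theorem stepVec_sub_stepVec (μ ν : Fin 4 → ℝ) :
    stepVec γ μ - stepVec γ ν = (μ - ν) ᵥ* of (Pmat γ (μ + ν)) := by
  ext j; fin_cases j <;> simp [vecMul, dotProduct, Pmat, Fin.sum_univ_four] <;> ring

theorem mul_add_piVec_apply_zero_mem_Icc (hγ0 : 0 ≤ γ) (hγ : γ ≤ 2 / 3) {ν : Fin 4 → ℝ}
    (hν : IsProbVec ν) : γ * (ν + piVec γ) 0 ∈ Set.Icc 0 ((1 + γ) / 2) := by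
  obtain ⟨⟨h0, h1, h2, h3⟩, hs⟩ := isProbVec_iff.1 hν
  have hpi : (ν + piVec γ) 0 = ν 0 + 1 / 4 := rfl
  rw [hpi]
  constructor <;> nlinarith

theorem sum_abs_Pmat_le {ν : Fin 4 → ℝ} {K : ℝ} (h0 : 0 ≤ γ * ν 0) (h1 : 2 * (γ * ν 0) ≤ K)
    (hK : 1 ≤ K) (i : Fin 4) : ∑ j, |Pmat γ ν i j| ≤ K := by
  fin_cases i
  · have hrow : ∑ j, |Pmat γ ν 0 j| = γ * ν 0 + |1 / 2 - γ * ν 0| + 1 / 2 := by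
      simp [Pmat, Fin.sum_univ_four, abs_of_nonneg h0]; norm_num
    change ∑ j, |Pmat γ ν 0 j| ≤ K
    rw [hrow]
    cases abs_cases (1 / 2 - γ * ν 0) <;> linarith
  all_goals simp [Pmat, Fin.sum_univ_four]; norm_num; exact hK

theorem Pmat_mul_Pmat_sub_quarter (μ ν : Fin 4 → ℝ) :
    of (Pmat γ μ) * of (Pmat γ ν) - replicateRow (Fin 4) (fun _ => 1 / 4) =
      of ![![0, γ * μ 0 / 2, -(γ * μ 0 / 2), 0], ![0, γ * ν 0 / 2, -(γ * ν 0 / 2), 0],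
        ![0, γ * ν 0 / 2 - 1 / 4, -(γ * ν 0 / 2 - 1 / 4), 0], ![0, 1 / 4, -(1 / 4), 0]] := by
  ext i j; fin_cases i <;> fin_cases j <;> simp [Pmat] <;> ring

theorem sum_abs_Pmat_mul_Pmat_sub_quarter_le {μ ν : Fin 4 → ℝ} {K : ℝ} (hμ0 : 0 ≤ γ * μ 0)
    (hμK : γ * μ 0 ≤ K) (hν0 : 0 ≤ γ * ν 0) (hνK : γ * ν 0 ≤ K) (hK : 1 / 2 ≤ K) (i : Fin 4) :
    ∑ j, |(of (Pmat γ μ) * of (Pmat γ ν) - replicateRow (Fin 4) (fun _ => 1 / 4) :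
      Matrix (Fin 4) (Fin 4) ℝ) i j| ≤ K := by
  rw [Pmat_mul_Pmat_sub_quarter]
  fin_cases i <;> simp [Fin.sum_univ_four]
  · rw [abs_of_nonneg (by linarith)]; linarith
  · rw [abs_of_nonneg (by linarith)]; linarith
  · rw [abs_sub_comm]; cases abs_cases (4⁻¹ - γ * ν 0 / 2) <;> linarith
  · linarith

theorem tvVec_stepVec_piVec_le (hγ0 : 0 ≤ γ) (hγ : γ ≤ 2 / 3) {μ : Fin 4 → ℝ}
    (hμ : IsProbVec μ) : tvVec (stepVec γ μ) (piVec γ) ≤ (1 + γ) * tvVec μ (piVec γ) := by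
  obtain ⟨ha0, haK⟩ := mul_add_piVec_apply_zero_mem_Icc hγ0 hγ hμ
  conv_lhs => rw [← stepVec_piVec (γ := γ)]
  rw [tvVec_eq_sum_abs_sub, tvVec_eq_sum_abs_sub, stepVec_sub_stepVec]
  exact sum_abs_vecMul_le _ _ (sum_abs_Pmat_le ha0 (by linarith) (by linarith))

theorem tvVec_stepVec_stepVec_piVec_le (hγ0 : 0 ≤ γ) (hγ : γ ≤ 1 / 2) {μ : Fin 4 → ℝ}
    (hμ : IsProbVec μ) :
    tvVec (stepVec γ (stepVec γ μ)) (piVec γ) ≤ (1 + γ) / 2 * tvVec μ (piVec γ) := by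
  obtain ⟨ha0, haK⟩ := mul_add_piVec_apply_zero_mem_Icc hγ0 (by linarith) hμ
  obtain ⟨hb0, hbK⟩ :=
    mul_add_piVec_apply_zero_mem_Icc hγ0 (by linarith) (isProbVec_stepVec hγ0 hγ hμ)
  have hsum := sum_sub_eq_zero_of_isProbVec hμ (isProbVec_piVec hγ0 (by linarith))
  conv_lhs => rw [← stepVec_piVec (γ := γ), ← stepVec_piVec (γ := γ)]
  rw [tvVec_eq_sum_abs_sub, tvVec_eq_sum_abs_sub, stepVec_sub_stepVec, stepVec_sub_stepVec,
    stepVec_piVec, vecMul_vecMul, ← vecMul_sub_replicateRow_of_sum_eq_zero hsum _ (fun _ => 1 / 4)]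
  exact sum_abs_vecMul_le _ _
    (sum_abs_Pmat_mul_Pmat_sub_quarter_le ha0 haK hb0 hbK (by linarith))

theorem tvVec_Pmat_two_three (μ : Fin 4 → ℝ) : tvVec (Pmat γ μ 2) (Pmat γ μ 3) = 2 := by
  simp [tvVec, Pmat, Fin.sum_univ_four]; norm_num

theorem tvVec_Pmat_le (hγ : 0 ≤ γ) {μ ν : Fin 4 → ℝ} (hμν : ∑ i, (μ - ν) i = 0) (x : Fin 4) :
    tvVec (Pmat γ μ x) (Pmat γ ν x) ≤ γ * tvVec μ ν := by
  have hd : 2 * |μ 0 - ν 0| ≤ tvVec μ ν := two_mul_abs_le_sum_abs_of_sum_eq_zero hμν 0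
  fin_cases x
  · have hrow : tvVec (Pmat γ μ 0) (Pmat γ ν 0) = γ * (2 * |μ 0 - ν 0|) := by
      simp [tvVec, Pmat, Fin.sum_univ_four]
      rw [← mul_sub, ← mul_sub, abs_mul, abs_mul, abs_of_nonneg hγ, abs_sub_comm (ν 0)]
      ring
    change tvVec (Pmat γ μ 0) (Pmat γ ν 0) ≤ γ * tvVec μ ν
    rw [hrow]; gcongr
  all_goals simp [tvVec, Pmat, Fin.sum_univ_four]; positivity

end ExampleChain

/-- for `0 < γ < 0.5` the example chain has a unique invariant distribution
`π` and `‖μ_n − π‖_TV ≤ ‖μ₀ − π‖_TV ((1+γ)/2)^{⌊n/2⌋} c_n`; moreover the one-step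
Dobrushin constant is `α = 0` (some pair of rows is at total variation distance `2`, so
the one-step condition fails for every `α > 0`) while the one-step Lipschitz constant is
`λ = γ > α`. -/
theorem example_chain_convergence (γ : ℝ) (hγ0 : 0 < γ) (hγ : γ < 0.5) :
    (∃ π : Fin 4 → ℝ, IsProbVec π ∧ stepVec γ π = π ∧
        (∀ π' : Fin 4 → ℝ, IsProbVec π' → stepVec γ π' = π' → π' = π) ∧
        (∀ μ0 : Fin 4 → ℝ, IsProbVec μ0 → ∀ n : ℕ,
          tvVec (margVec γ μ0 n) π ≤
            tvVec μ0 π * ((1 + γ) / 2) ^ (n / 2) * (if Odd n then 1 + γ else 1))) ∧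
      (∃ μ : Fin 4 → ℝ, ∃ x y : Fin 4, IsProbVec μ ∧ tvVec (Pmat γ μ x) (Pmat γ μ y) = 2) ∧
      (∀ μ ν : Fin 4 → ℝ, IsProbVec μ → IsProbVec ν → ∀ x : Fin 4,
        tvVec (Pmat γ μ x) (Pmat γ ν x) ≤ γ * tvVec μ ν) := by
  norm_num at hγ
  have hπ : IsProbVec (piVec γ) := isProbVec_piVec hγ0.le (by linarith)
  have hmarg (μ0 : Fin 4 → ℝ) (hμ0 : IsProbVec μ0) (n : ℕ) : IsProbVec (margVec γ μ0 n) := by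
    induction n with
    | zero => exact hμ0
    | succ n ih => exact isProbVec_stepVec hγ0.le hγ.le ih
  refine ⟨⟨piVec γ, hπ, stepVec_piVec, fun π' hπ' h => eq_piVec_of_stepVec_eq hπ'.2 h,
      fun μ0 hμ0 => le_mul_pow_div_two_mul_of_two_step (by linarith) (by linarith)
        (fun n => tvVec_stepVec_piVec_le hγ0.le (by linarith) (hmarg μ0 hμ0 n))
        (fun n => tvVec_stepVec_stepVec_piVec_le hγ0.le hγ.le (hmarg μ0 hμ0 n))⟩,
    ⟨piVec γ, 2, 3, hπ, tvVec_Pmat_two_three _⟩,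
    fun μ ν hμ hν => tvVec_Pmat_le hγ0.le (sum_sub_eq_zero_of_isProbVec hμ hν)⟩
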